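/- Let K be a class of algebras of some fixed signature such that the variety HSP(K) is congruence-modular. Let B ∈ HSP(K) be subdirectly irreducible with monolith μ, and let α be the centralizer of μ, i.e., the largest congruence of B with [μ, α] = ⊥ (which exists by additivity of the commutator). Then B/α ∈ HSP_u(K). -/

import Mathlib

/-!
Basic universal algebra: signatures, algebras, homomorphisms, congruences
(forming a complete lattice), generated congruences, images and preimages of
congruences, quotient algebras, subalgebras, products, ultraproducts,
varieties (classes closed under H, S, P), the term-condition commutator,
relatively free algebras, and lax centrality.
-/

universe u v

namespace UAlg

/-- A (finitary) signature: a type of operation symbols with arities. -/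
structure Signature : Type (u + 1) where
  ops : Type u
  arity : ops → ℕ

/-- An algebra of signature `S`. -/
structure Algebra (S : Signature.{u}) : Type (u + 1) where
  carrier : Type u
  interp : ∀ o : S.ops, (Fin (S.arity o) → carrier) → carrier

variable {S : Signature.{u}}

/-- A homomorphism of algebras. -/
structure Hom (A B : Algebra S) : Type u where
  toFun : A.carrier → B.carrier
  map_interp : ∀ (o : S.ops) (a : Fin (S.arity o) → A.carrier),
    toFun (A.interp o a) = B.interp o (fun i => toFun (a i))

/-- Composition of homomorphisms. -/
def Hom.comp {A B C : Algebra S} (g : Hom B C) (f : Hom A B) : Hom A C where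
  toFun := g.toFun ∘ f.toFun
  map_interp o a := by
    simp only [Function.comp, f.map_interp, g.map_interp]

/-- A congruence on an algebra: an equivalence relation compatible with the
operations. -/
structure Cong (A : Algebra S) : Type u where
  r : A.carrier → A.carrier → Prop
  iseqv : Equivalence r
  compat : ∀ (o : S.ops) (a b : Fin (S.arity o) → A.carrier),
    (∀ i, r (a i) (b i)) → r (A.interp o a) (A.interp o b)

namespace Cong

variable {A : Algebra S}

theorem ext {c d : Cong A} (h : ∀ x y, c.r x y ↔ d.r x y) : c = d := by
  cases c; cases d
  simp only [mk.injEq]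
  funext x y
  exact propext (h x y)

instance : PartialOrder (Cong A) where
  le c d := ∀ x y, c.r x y → d.r x y
  le_refl c := fun _ _ h => h
  le_trans a b c hab hbc := fun x y h => hbc x y (hab x y h)
  le_antisymm a b h1 h2 := ext fun x y => ⟨h1 x y, h2 x y⟩

instance : InfSet (Cong A) where
  sInf s :=
    { r := fun x y => ∀ c ∈ s, c.r x y
      iseqv :=
        ⟨fun x c _ => c.iseqv.refl x,
         fun h c hc => c.iseqv.symm (h c hc),
         fun h1 h2 c hc => c.iseqv.trans (h1 c hc) (h2 c hc)⟩
      compat := fun o a b h c hc => c.compat o a b fun i => h i c hc }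

instance : CompleteLattice (Cong A) :=
  completeLatticeOfInf _ (fun s =>
    ⟨fun c hc x y h => h c hc, fun _ hd x y h c hc => hd hc x y h⟩)

end Cong

/-- The congruence generated by a binary relation. -/
def conGen (A : Algebra S) (s : A.carrier → A.carrier → Prop) : Cong A :=
  sInf {c : Cong A | ∀ x y, s x y → c.r x y}

/-- The kernel congruence of a homomorphism. -/
def Hom.ker {A B : Algebra S} (f : Hom A B) : Cong A where
  r x y := f.toFun x = f.toFun y
  iseqv := ⟨fun _ => rfl, Eq.symm, Eq.trans⟩
  compat o a b h := by
    show f.toFun (A.interp o a) = f.toFun (A.interp o b)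
    rw [f.map_interp, f.map_interp]
    exact congrArg _ (funext h)

/-- `conMap f α` (written `→f α` in the paper) is the congruence of `B`
generated by the image `f(α)` of the congruence `α` of `A`. -/
def conMap {A B : Algebra S} (f : Hom A B) (α : Cong A) : Cong B :=
  conGen B (fun x y => ∃ a a', α.r a a' ∧ f.toFun a = x ∧ f.toFun a' = y)

/-- The inverse image `f⁻¹(β)` of a congruence. -/
def conComap {A B : Algebra S} (f : Hom A B) (β : Cong B) : Cong A where
  r x y := β.r (f.toFun x) (f.toFun y)
  iseqv :=
    ⟨fun _ => β.iseqv.refl _, fun h => β.iseqv.symm h,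
     fun h1 h2 => β.iseqv.trans h1 h2⟩
  compat o a b h := by
    show β.r (f.toFun (A.interp o a)) (f.toFun (A.interp o b))
    rw [f.map_interp, f.map_interp]
    exact β.compat o _ _ h

/-- The setoid underlying a congruence. -/
def Cong.toSetoid {A : Algebra S} (c : Cong A) : Setoid A.carrier :=
  ⟨c.r, c.iseqv⟩

/-- The quotient algebra of an algebra by a congruence. -/
noncomputable def quotAlg (A : Algebra S) (c : Cong A) : Algebra S where
  carrier := Quotient c.toSetoid
  interp o a := Quotient.mk c.toSetoid (A.interp o (fun i => (a i).out))

/-- The natural (quotient) homomorphism `A → A/c`. -/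
def natHom (A : Algebra S) (c : Cong A) : Hom A (quotAlg A c) where
  toFun := Quotient.mk c.toSetoid
  map_interp o a := by
    apply Quotient.sound
    apply c.compat
    intro i
    show c.r (a i) (Quotient.mk c.toSetoid (a i)).out
    exact Quotient.exact ((Quotient.out_eq (Quotient.mk c.toSetoid (a i))).symm)

/-- A subuniverse: a subset closed under the operations. -/
structure Subuniverse (A : Algebra S) : Type u where
  carrier : Set A.carrier
  closed : ∀ (o : S.ops) (a : Fin (S.arity o) → A.carrier),
    (∀ i, a i ∈ carrier) → A.interp o a ∈ carrier

/-- The subalgebra determined by a subuniverse. -/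
def Subuniverse.alg {A : Algebra S} (s : Subuniverse A) : Algebra S where
  carrier := {x // x ∈ s.carrier}
  interp o a := ⟨A.interp o (fun i => (a i).1), s.closed o _ (fun i => (a i).2)⟩

/-- The product of a family of algebras. -/
def prodAlg {ι : Type u} (A : ι → Algebra S) : Algebra S where
  carrier := ∀ i, (A i).carrier
  interp o a i := (A i).interp o (fun j => a j i)

/-- A variety: a class of algebras closed under homomorphic images,
subalgebras, and products. -/
structure IsVariety (V : Algebra S → Prop) : Prop where
  closed_hom : ∀ (A B : Algebra S) (f : Hom A B),
    Function.Surjective f.toFun → V A → V B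
  closed_sub : ∀ (A : Algebra S) (s : Subuniverse A), V A → V s.alg
  closed_prod : ∀ (ι : Type u) (A : ι → Algebra S), (∀ i, V (A i)) → V (prodAlg A)

/-- `α` laxly centralizes `μ` with respect to the class `V`. -/
def LaxCentralizes (V : Algebra S → Prop) (B : Algebra S) (μ α : Cong B) : Prop :=
  ∃ C : Algebra S, V C ∧ ∃ (π : Hom C B) (β γ : Cong C),
    Function.Surjective π.toFun ∧ μ ≤ conMap π β ∧ α ≤ conMap π γ ∧ β ⊓ γ = ⊥

/-- `B` is a homomorphic image of a member of `K`. -/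
def InH (K : Algebra S → Prop) (B : Algebra S) : Prop :=
  ∃ A, K A ∧ ∃ f : Hom A B, Function.Surjective f.toFun

/-- `B` embeds into a product of members of `K`, i.e. `B ∈ SP(K)`. -/
def InSP (K : Algebra S → Prop) (B : Algebra S) : Prop :=
  ∃ (ι : Type u) (A : ι → Algebra S), (∀ i, K (A i)) ∧
    ∃ f : Hom B (prodAlg A), Function.Injective f.toFun

/-- `B ∈ HSP(K)`: `B` is a homomorphic image of an algebra embeddable in a
product of members of `K`. -/
def InHSP (K : Algebra S → Prop) (B : Algebra S) : Prop :=
  ∃ C : Algebra S, InSP K C ∧ ∃ f : Hom C B, Function.Surjective f.toFun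

/-- The congruence on a product given by an ultrafilter on the index set. -/
def ultraCong {ι : Type u} (A : ι → Algebra S) (U : Ultrafilter ι) :
    Cong (prodAlg A) where
  r x y := {i | x i = y i} ∈ U
  iseqv := by
    refine ⟨fun x => ?_, fun {x y} h => ?_, fun {x y z} h1 h2 => ?_⟩
    · have : {i | x i = x i} = Set.univ := by ext i; simp
      rw [this]; exact Filter.univ_mem
    · have : {i | y i = x i} = {i | x i = y i} := by ext i; exact eq_comm
      rw [this]; exact h
    · refine Filter.mem_of_superset (Filter.inter_mem h1 h2) ?_
      intro i hi
      exact hi.1.trans hi.2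
  compat o a b h := by
    have h1 : (⋂ j, {i | a j i = b j i}) ∈ (U : Filter ι) :=
      (Filter.iInter_mem).2 h
    refine Filter.mem_of_superset h1 ?_
    intro i hi
    simp only [Set.mem_iInter, Set.mem_setOf_eq] at hi
    show (A i).interp o (fun j => a j i) = (A i).interp o (fun j => b j i)
    exact congrArg _ (funext hi)

/-- `B ∈ HSP_u(K)`: `B` is a homomorphic image of an algebra embeddable in an
ultraproduct of members of `K`. -/
def InHSPu (K : Algebra S → Prop) (B : Algebra S) : Prop :=
  ∃ (ι : Type u) (A : ι → Algebra S) (U : Ultrafilter ι), (∀ i, K (A i)) ∧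
    ∃ C : Algebra S,
      (∃ g : Hom C (quotAlg (prodAlg A) (ultraCong A U)),
        Function.Injective g.toFun) ∧
      ∃ f : Hom C B, Function.Surjective f.toFun

/-- `μ` is the monolith of `B`: the minimum nontrivial congruence.
In particular its existence means `B` is subdirectly irreducible. -/
def IsMonolith (B : Algebra S) (μ : Cong B) : Prop :=
  μ ≠ ⊥ ∧ ∀ θ : Cong B, θ ≠ ⊥ → μ ≤ θ

/-- Terms of signature `S` over a set `X` of variables. -/
inductive Tm (S : Signature.{u}) (X : Type v) : Type max u v where
  | var : X → Tm S X
  | app : (o : S.ops) → (Fin (S.arity o) → Tm S X) → Tm S X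

/-- Evaluation of a term in an algebra under an assignment of the variables. -/
def Tm.eval {X : Type v} (A : Algebra S) (v : X → A.carrier) :
    Tm S X → A.carrier
  | .var x => v x
  | .app o t => A.interp o (fun i => Tm.eval A v (t i))

/-- The (term-condition) centralizing relation `C(α, β; δ)`. -/
def Centralizes {A : Algebra S} (α β δ : Cong A) : Prop :=
  ∀ (n : ℕ) (t : Tm S (Unit ⊕ Fin n)) (a b : A.carrier)
    (c d : Fin n → A.carrier),
    α.r a b → (∀ i, β.r (c i) (d i)) →
    δ.r (t.eval A (Sum.elim (fun _ => a) c)) (t.eval A (Sum.elim (fun _ => a) d)) →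
    δ.r (t.eval A (Sum.elim (fun _ => b) c)) (t.eval A (Sum.elim (fun _ => b) d))

/-- The commutator `[α, β]`: the least congruence `δ` such that `α`
centralizes `β` modulo `δ` (the Freese–McKenzie commutator, which is the
modular commutator in congruence-modular varieties). -/
def commutator {A : Algebra S} (α β : Cong A) : Cong A :=
  sInf {δ : Cong A | Centralizes α β δ}

/-- The term algebra over a set of variables. -/
def termAlg (S : Signature.{u}) (X : Type u) : Algebra S :=
  ⟨Tm S X, Tm.app⟩

/-- The congruence of `V`-equations on the term algebra: two terms are related
iff they evaluate the same way in every member of `V`. -/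
def eqThy (V : Algebra S → Prop) (X : Type u) : Cong (termAlg S X) where
  r s t := ∀ A : Algebra S, V A → ∀ v : X → A.carrier, s.eval A v = t.eval A v
  iseqv :=
    ⟨fun _ _ _ _ => rfl, fun h A hA v => (h A hA v).symm,
     fun h1 h2 A hA v => (h1 A hA v).trans (h2 A hA v)⟩
  compat o a b h A hA v := by
    show Tm.eval A v (Tm.app o a) = Tm.eval A v (Tm.app o b)
    simp only [Tm.eval]
    exact congrArg _ (funext fun i => h i A hA v)

/-- The relatively free algebra of `V` on the set `X` of generators. -/
noncomputable def freeAlg (V : Algebra S → Prop) (X : Type u) : Algebra S :=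
  quotAlg (termAlg S X) (eqThy V X)

/-- The canonical generators of the relatively free algebra. -/
def freeGen (V : Algebra S → Prop) (X : Type u) (x : X) :
    (freeAlg V X).carrier :=
  Quotient.mk (eqThy V X).toSetoid (Tm.var x)

/-- The homomorphism from the relatively free algebra of `V` to an algebra
`B ∈ V` induced by an assignment of the generators. -/
def evalFreeHom (V : Algebra S → Prop) (X : Type u) (B : Algebra S)
    (hB : V B) (v : X → B.carrier) : Hom (freeAlg V X) B where
  toFun := Quotient.lift (fun t : Tm S X => t.eval B v) (fun s t h => h B hB v)
  map_interp o a := by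
    show Tm.eval B v (Tm.app o (fun i => (a i).out)) = _
    simp only [Tm.eval]
    congr 1
    funext i
    conv_rhs => rw [← Quotient.out_eq (a i)]
    rfl

/-!
Write `B = F / ker π` with `F ≤ ∏ᵢ Aᵢ`, `Aᵢ ∈ K`, and for `J ⊆ ι` let `η J` be the image in `B`
of the kernel of the projection of `F` onto the coordinates in `J`. Coordinate kernels
centralize each other modulo the kernel for `J ∪ J'`. With Day terms the centralizing relation
is symmetric and monotone in its third argument, so this survives joining with `ker π` and
passing to `B`: `C(η J, η J'; η (J ∪ J'))`. Hence if `μ ≤ η J` and `η J' ≰ α`, then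
`μ ≤ η (J ∪ J')`: otherwise `[μ, η J'] ≤ μ ⊓ η (J ∪ J') = ⊥`, and `α` would not be maximal.
Starting from `η ∅ = ⊤` and ending at `η ι = ⊥ ≱ μ`, no finite cover of `ι` consists of sets
`J` with `η J ≰ α`, so some ultrafilter `U` has `η J ≤ α` for all `J ∈ U`. Then the quotient
of `F` by the kernel of `F → ∏_U Aᵢ` lies in `SP_u(K)` and maps onto `B / α`.
-/

open Relation Function

theorem _root_.Function.induction_update {ι α : Type*} [Finite ι] [DecidableEq ι]
    (P : (ι → α) → Prop) {a b : ι → α} (ha : P a)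
    (step : ∀ v j, P (update v j (a j)) → P (update v j (b j))) : P b := by
  have := Fintype.ofFinite ι
  suffices ∀ s : Finset ι, P (s.piecewise b a) by simpa using this Finset.univ
  intro s
  induction s using Finset.induction_on with
  | empty => simpa using ha
  | insert j s hj ih =>
    rw [Finset.piecewise_insert]
    refine step _ j ?_
    rwa [update_eq_self_iff.mpr (Finset.piecewise_eq_of_notMem _ _ _ hj).symm]

theorem _root_.Ultrafilter.exists_forall_of_sUnion_ne_univ {ι : Type*} (P : Set ι → Prop)
    (h : ∀ T : Finset (Set ι), (∀ J ∈ T, ¬ P J) → ⋃₀ (T : Set (Set ι)) ≠ Set.univ) :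
    ∃ U : Ultrafilter ι, ∀ J ∈ U, P J := by
  classical
  obtain ⟨U, hU⟩ := Ultrafilter.exists_ultrafilter_of_finite_inter_nonempty {J | ¬ P Jᶜ}
    fun T hT => by
      have := h (T.image compl) <| by
        simp only [Finset.mem_image]
        rintro _ ⟨K, hK, rfl⟩
        exact hT hK
      rwa [Finset.coe_image, ← Set.compl_sInter, Set.compl_ne_univ] at this
  refine ⟨U, fun J hJ => by_contra fun hP => ?_⟩
  exact Ultrafilter.compl_mem_iff_notMem.mp (hU (show ¬ P Jᶜᶜ by rwa [compl_compl])) hJ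

namespace Cong

variable {A : Algebra S}

theorem bot_r {x y : A.carrier} : (⊥ : Cong A).r x y ↔ x = y := by
  refine ⟨fun h => ?_, fun h => h ▸ (⊥ : Cong A).iseqv.refl x⟩
  let eq : Cong A :=
    ⟨Eq, ⟨fun _ => rfl, Eq.symm, Eq.trans⟩, fun _ _ _ h => congrArg _ (funext h)⟩
  exact (bot_le : ⊥ ≤ eq) x y h

theorem inf_r {c d : Cong A} {x y : A.carrier} : (c ⊓ d).r x y ↔ c.r x y ∧ d.r x y := by
  constructor
  · exact fun h => ⟨(inf_le_left : c ⊓ d ≤ c) x y h, (inf_le_right : c ⊓ d ≤ d) x y h⟩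
  · rintro ⟨h1, h2⟩ e (rfl | rfl) <;> assumption

theorem rel_of_reflTransGen (c : Cong A) {R : A.carrier → A.carrier → Prop}
    (h : ∀ x y, R x y → c.r x y) {x y : A.carrier} (hxy : ReflTransGen R x y) : c.r x y := by
  induction hxy with
  | refl => exact c.iseqv.refl x
  | tail _ hst ih => exact c.iseqv.trans ih (h _ _ hst)

theorem rel_interp_update (c : Cong A) (o : S.ops) (a : Fin (S.arity o) → A.carrier)
    (j : Fin (S.arity o)) {u v : A.carrier} (h : c.r u v) :
    c.r (A.interp o (update a j u)) (A.interp o (update a j v)) :=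
  c.compat o _ _ fun i => by
    rcases eq_or_ne i j with rfl | hij
    · simpa using h
    · simpa [update_of_ne hij] using c.iseqv.refl (a i)

def join (c d : Cong A) : Cong A where
  r := ReflTransGen fun x y => c.r x y ∨ d.r x y
  iseqv :=
    ⟨fun _ => .refl,
     fun h => ReflTransGen.mono (fun _ _ h => h.imp c.iseqv.symm d.iseqv.symm) _ _
       (ReflTransGen.swap _ _ h),
     ReflTransGen.trans⟩
  compat o a _ h :=
    induction_update (fun v => ReflTransGen _ (A.interp o a) (A.interp o v)) .refl
      fun v j ih => ih.trans <| ReflTransGen.lift' (p := fun x y => c.r x y ∨ d.r x y)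
        (fun u => A.interp o (update v j u))
        (fun _ _ huv => .single (huv.imp (c.rel_interp_update o v j) (d.rel_interp_update o v j)))
        _ _ (h j)

instance instTrans (c : Cong A) : Trans c.r c.r c.r := ⟨c.iseqv.trans⟩

theorem sup_r {c d : Cong A} {x y : A.carrier} :
    (c ⊔ d).r x y ↔ ReflTransGen (fun x y => c.r x y ∨ d.r x y) x y :=
  ⟨(sup_le (a := c) (b := d) (c := join c d) (fun _ _ h => ReflTransGen.single (.inl h))
      (fun _ _ h => ReflTransGen.single (.inr h))) x y,
    (c ⊔ d).rel_of_reflTransGen fun _ _ h =>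
      h.elim ((le_sup_left : c ≤ c ⊔ d) _ _) ((le_sup_right : d ≤ c ⊔ d) _ _)⟩

end Cong

section ConGen

variable {A : Algebra S}

theorem conGen_r_of (s : A.carrier → A.carrier → Prop) {x y : A.carrier} (h : s x y) :
    (conGen A s).r x y := fun _ hc => hc x y h

theorem conGen_le {s : A.carrier → A.carrier → Prop} {c : Cong A}
    (h : ∀ x y, s x y → c.r x y) : conGen A s ≤ c :=
  sInf_le h

end ConGen

section Terms

variable {A B : Algebra S} {X : Type v}

theorem Cong.rel_eval (ρ : Cong A) {v v' : X → A.carrier} (h : ∀ z, ρ.r (v z) (v' z))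
    (t : Tm S X) : ρ.r (t.eval A v) (t.eval A v') := by
  induction t with
  | var z => exact h z
  | app o ts ih => exact ρ.compat o _ _ ih

theorem Hom.map_eval (f : Hom A B) (v : X → A.carrier) (t : Tm S X) :
    f.toFun (t.eval A v) = t.eval B (f.toFun ∘ v) := by
  induction t with
  | var z => rfl
  | app o ts ih => exact (f.map_interp o _).trans (congrArg _ (funext ih))

theorem Tm.eval_prodAlg {ι : Type u} (D : ι → Algebra S) (t : Tm S X)
    (w : X → (prodAlg D).carrier) (i : ι) :
    t.eval (prodAlg D) w i = t.eval (D i) (fun z => w z i) := by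
  induction t with
  | var z => rfl
  | app o ts ih => exact congrArg ((D i).interp o) (funext ih)

def Tm.relabel {Y : Type*} (g : X → Y) : Tm S X → Tm S Y
  | .var z => .var (g z)
  | .app o ts => .app o fun i => (ts i).relabel g

theorem Tm.eval_relabel {Y : Type*} (g : X → Y) (t : Tm S X) (v : Y → A.carrier) :
    (t.relabel g).eval A v = t.eval A (v ∘ g) := by
  induction t with
  | var z => rfl
  | app o ts ih => exact congrArg (A.interp o) (funext ih)

end Terms

section Centralizes

variable {A : Algebra S} {x x' y z δ : Cong A}

theorem Centralizes.mono_left (hx : x' ≤ x) (h : Centralizes x y δ) : Centralizes x' y δ :=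
  fun n t a b c d hab hcd => h n t a b c d (hx _ _ hab) hcd

theorem centralizes_of_left_le (hx : x ≤ δ) : Centralizes x y δ := by
  intro n t a b c d hab _ hδ
  have hb : ∀ e : Fin n → A.carrier,
      δ.r (t.eval A (Sum.elim (fun _ => a) e)) (t.eval A (Sum.elim (fun _ => b) e)) :=
    fun e => δ.rel_eval (fun | .inl _ => hx _ _ hab | .inr i => δ.iseqv.refl (e i)) t
  exact δ.iseqv.trans (δ.iseqv.trans (δ.iseqv.symm (hb c)) hδ) (hb d)

theorem centralizes_of_right_le (hy : y ≤ δ) : Centralizes x y δ :=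
  fun _ t _ _ _ _ _ hcd _ =>
    δ.rel_eval (fun | .inl _ => δ.iseqv.refl _ | .inr i => hy _ _ (hcd i)) t

theorem Centralizes.commutator_le (h : Centralizes x y δ) : commutator x y ≤ δ :=
  sInf_le h

theorem commutator_le_left (x y : Cong A) : commutator x y ≤ x :=
  (centralizes_of_left_le le_rfl).commutator_le

theorem Centralizes.sup_left (hx : Centralizes x z δ) (hy : Centralizes y z δ) :
    Centralizes (x ⊔ y) z δ := by
  intro n t a b c d hab hcd hδ
  replace hab := Cong.sup_r.mp hab
  induction hab with
  | refl => exact hδ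
  | tail _ hst ih => exact hst.elim (hx n t _ _ c d · hcd ih) (hy n t _ _ c d · hcd ih)

theorem Centralizes.apply_of_finite (h : Centralizes x y δ) {Y : Type*} [Finite Y]
    (t : Tm S (Unit ⊕ Y)) {a b : A.carrier} {c d : Y → A.carrier} (hab : x.r a b)
    (hcd : ∀ i, y.r (c i) (d i))
    (hδ : δ.r (t.eval A (Sum.elim (fun _ => a) c)) (t.eval A (Sum.elim (fun _ => a) d))) :
    δ.r (t.eval A (Sum.elim (fun _ => b) c)) (t.eval A (Sum.elim (fun _ => b) d)) := by
  obtain ⟨n, ⟨e⟩⟩ := Finite.exists_equiv_fin Y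
  have key : ∀ (a : A.carrier) (c : Y → A.carrier),
      Sum.elim (fun _ : Unit => a) (c ∘ e.symm) ∘ Sum.map id e = Sum.elim (fun _ => a) c := by
    intro a c
    rw [Sum.elim_comp_map, Function.comp_assoc, e.symm_comp_self]
    rfl
  have := h n (t.relabel (Sum.map id e)) a b (c ∘ e.symm) (d ∘ e.symm) hab fun i => hcd _
  simp only [Tm.eval_relabel, key] at this
  exact this hδ

theorem Centralizes.apply_update (h : Centralizes x y δ) {X Y : Type*} [Finite X] [Finite Y]
    [DecidableEq X] (t : Tm S (X ⊕ Y)) (v : X → A.carrier) (k : X) {a b : A.carrier}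
    (hab : x.r a b) {c d : Y → A.carrier} (hcd : ∀ i, y.r (c i) (d i))
    (hδ : δ.r (t.eval A (Sum.elim (update v k a) c)) (t.eval A (Sum.elim (update v k a) d))) :
    δ.r (t.eval A (Sum.elim (update v k b) c)) (t.eval A (Sum.elim (update v k b) d)) := by
  let φ : X ⊕ Y → Unit ⊕ (X ⊕ Y) :=
    Sum.elim (fun j => if j = k then .inl () else .inr (.inl j)) (Sum.inr ∘ Sum.inr)
  have key : ∀ (a : A.carrier) (c : Y → A.carrier),
      Sum.elim (fun _ : Unit => a) (Sum.elim v c) ∘ φ = Sum.elim (update v k a) c := by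
    intro a c
    ext (j | i)
    · by_cases hj : j = k <;> simp [φ, hj]
    · rfl
  have := h.apply_of_finite (t.relabel φ) hab (c := Sum.elim v c) (d := Sum.elim v d)
    (fun | .inl j => y.iseqv.refl (v j) | .inr i => hcd i)
  simp only [Tm.eval_relabel, key] at this
  exact this hδ

end Centralizes

section Matrices

variable {A : Algebra S} {x y δ : Cong A}

/-- The `(x, y)`-matrices `M(x, y)` of Freese–McKenzie. -/
def IsMatrix (x y : Cong A) (p q r s : A.carrier) : Prop :=
  ∃ (X Y : Type u) (_ : Finite X) (_ : Finite Y) (t : Tm S (X ⊕ Y)) (a b : X → A.carrier)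
    (c d : Y → A.carrier), (∀ j, x.r (a j) (b j)) ∧ (∀ i, y.r (c i) (d i)) ∧
    p = t.eval A (Sum.elim a c) ∧ q = t.eval A (Sum.elim a d) ∧
    r = t.eval A (Sum.elim b c) ∧ s = t.eval A (Sum.elim b d)

namespace IsMatrix

variable {p q r s : A.carrier}

theorem top_rel (h : IsMatrix x y p q r s) : y.r p q := by
  obtain ⟨X, Y, _, _, t, a, b, c, d, _, hcd, rfl, rfl, rfl, rfl⟩ := h
  exact y.rel_eval (fun | .inl j => y.iseqv.refl (a j) | .inr i => hcd i) t

theorem right_rel (h : IsMatrix x y p q r s) : x.r q s := by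
  obtain ⟨X, Y, _, _, t, a, b, c, d, hab, _, rfl, rfl, rfl, rfl⟩ := h
  exact x.rel_eval (fun | .inl j => hab j | .inr i => x.iseqv.refl (d i)) t

theorem of_rel_y {u v : A.carrier} (h : y.r u v) : IsMatrix x y u v u v :=
  ⟨PUnit, PUnit, inferInstance, inferInstance, .var (.inr .unit), fun _ => u, fun _ => u,
    fun _ => u, fun _ => v, fun _ => x.iseqv.refl u, fun _ => h, rfl, rfl, rfl, rfl⟩

theorem of_rel_x {u v : A.carrier} (h : x.r u v) : IsMatrix x y u u v v :=
  ⟨PUnit, PUnit, inferInstance, inferInstance, .var (.inl .unit), fun _ => u, fun _ => v,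
    fun _ => u, fun _ => u, fun _ => h, fun _ => y.iseqv.refl u, rfl, rfl, rfl, rfl⟩

theorem transpose (h : IsMatrix x y p q r s) : IsMatrix y x p r q s := by
  obtain ⟨X, Y, _, _, t, a, b, c, d, hab, hcd, rfl, rfl, rfl, rfl⟩ := h
  refine ⟨Y, X, inferInstance, inferInstance, t.relabel Sum.swap, c, d, a, b, hcd, hab,
    ?_, ?_, ?_, ?_⟩ <;> rw [Tm.eval_relabel, Sum.elim_swap]

theorem interp (o : S.ops) {p q r s : Fin (S.arity o) → A.carrier}
    (h : ∀ i, IsMatrix x y (p i) (q i) (r i) (s i)) :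
    IsMatrix x y (A.interp o p) (A.interp o q) (A.interp o r) (A.interp o s) := by
  choose X Y _ _ t a b c d hab hcd hp hq hr hs using h
  refine ⟨Σ i, X i, Σ i, Y i, inferInstance, inferInstance,
    .app o fun i => (t i).relabel (Sum.map (Sigma.mk i) (Sigma.mk i)),
    fun j => a j.1 j.2, fun j => b j.1 j.2, fun j => c j.1 j.2, fun j => d j.1 j.2,
    fun j => hab j.1 j.2, fun j => hcd j.1 j.2, ?_, ?_, ?_, ?_⟩ <;>
  refine congrArg (A.interp o) (funext fun i => ?_) <;>
  rw [Tm.eval_relabel, Sum.elim_comp_map]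
  exacts [hp i, hq i, hr i, hs i]

theorem eval {Z : Type v} (t : Tm S Z) {p q r s : Z → A.carrier}
    (h : ∀ z, IsMatrix x y (p z) (q z) (r z) (s z)) :
    IsMatrix x y (t.eval A p) (t.eval A q) (t.eval A r) (t.eval A s) := by
  induction t with
  | var z => exact h z
  | app o ts ih => exact interp o ih

theorem of_centralizes_instance {n : ℕ} (t : Tm S (Unit ⊕ Fin n)) {a b : A.carrier}
    {c d : Fin n → A.carrier} (hab : x.r a b) (hcd : ∀ i, y.r (c i) (d i)) :
    IsMatrix x y (t.eval A (Sum.elim (fun _ => a) c)) (t.eval A (Sum.elim (fun _ => a) d))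
      (t.eval A (Sum.elim (fun _ => b) c)) (t.eval A (Sum.elim (fun _ => b) d)) := by
  refine ⟨ULift.{u} Unit, ULift.{u} (Fin n), inferInstance, inferInstance,
    t.relabel (Sum.map ULift.up ULift.up), fun _ => a, fun _ => b, c ∘ ULift.down,
    d ∘ ULift.down, fun _ => hab, fun i => hcd i.down, ?_, ?_, ?_, ?_⟩ <;>
  rw [Tm.eval_relabel, Sum.elim_comp_map] <;> rfl

end IsMatrix

/-- Changing the `x`-variables of a matrix one at a time. -/
theorem Centralizes.isMatrix (h : Centralizes x y δ) {p q r s : A.carrier}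
    (hm : IsMatrix x y p q r s) (hpq : δ.r p q) : δ.r r s := by
  classical
  obtain ⟨X, Y, _, _, t, a, b, c, d, hab, hcd, rfl, rfl, rfl, rfl⟩ := hm
  exact induction_update (fun v => δ.r (t.eval A (Sum.elim v c)) (t.eval A (Sum.elim v d))) hpq
    fun v j => h.apply_update t v j (hab j) hcd

end Matrices

section HSP

variable {K : Algebra S → Prop}

def Hom.id (A : Algebra S) : Hom A A := ⟨_root_.id, fun _ _ => rfl⟩

def Hom.pi {C : Algebra S} {ι : Type u} {A : ι → Algebra S} (f : ∀ i, Hom C (A i)) :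
    Hom C (prodAlg A) :=
  ⟨fun c i => (f i).toFun c, fun o a => funext fun i => (f i).map_interp o a⟩

theorem InSP.inHSP {C : Algebra S} (h : InSP K C) : InHSP K C :=
  ⟨C, h, Hom.id C, fun a => ⟨a, rfl⟩⟩

theorem InHSP.of_mem {A : Algebra S} (h : K A) : InHSP K A :=
  InSP.inHSP ⟨PUnit, fun _ => A, fun _ => h, Hom.pi fun _ => Hom.id A,
    fun _ _ h => congrFun h PUnit.unit⟩

theorem InHSP.eval_eq {X : Type v} {s t : Tm S X}
    (hK : ∀ A, K A → ∀ v : X → A.carrier, s.eval A v = t.eval A v) {B : Algebra S}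
    (hB : InHSP K B) (v : X → B.carrier) : s.eval B v = t.eval B v := by
  obtain ⟨C, ⟨ι, D, hD, e, he⟩, f, hf⟩ := hB
  obtain ⟨w, rfl⟩ := hf.comp_left v
  rw [← Hom.map_eval, ← Hom.map_eval]
  refine congrArg f.toFun (he ?_)
  rw [Hom.map_eval, Hom.map_eval]
  funext i
  rw [Tm.eval_prodAlg, Tm.eval_prodAlg]
  exact hK _ (hD i) _

theorem evalFreeHom_apply (V : Algebra S → Prop) (X : Type u) (B : Algebra S) (hB : V B)
    (v : X → B.carrier) (q : (freeAlg V X).carrier) :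
    (evalFreeHom V X B hB v).toFun q = q.out.eval B v := by
  conv_lhs => rw [← Quotient.out_eq q]
  rfl

/-- The free algebra embeds into the product of members of `K` separating its elements. -/
theorem freeAlg_mem (X : Type u) : InHSP K (freeAlg (InHSP K) X) := by
  let ι := {st : Tm S X × Tm S X // ¬ (eqThy (InHSP K) X).r st.1 st.2}
  have hsep : ∀ i : ι, ∃ A, K A ∧ ∃ v : X → A.carrier, i.1.1.eval A v ≠ i.1.2.eval A v :=
    fun i => by
      by_contra! h
      exact i.2 fun B hB => InHSP.eval_eq h hB
  choose A hA v hv using hsep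
  refine InSP.inHSP ⟨ι, A, hA, Hom.pi fun i => evalFreeHom _ X (A i) (.of_mem (hA i)) (v i), ?_⟩
  rintro ⟨s⟩ ⟨t⟩ hst
  by_contra hne
  have hrel : ¬ (eqThy (InHSP K) X).r s t := fun h => hne (Quotient.sound h)
  exact hv ⟨(s, t), hrel⟩ (congrFun hst ⟨(s, t), hrel⟩)

end HSP

section Day

variable (K : Algebra S → Prop)

noncomputable abbrev free4 : Algebra S := freeAlg (InHSP K) (ULift.{u} (Fin 4))

def gen4 (i : Fin 4) : (free4 K).carrier := freeGen (InHSP K) _ (ULift.up i)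

noncomputable def cong01_23 : Cong (free4 K) :=
  conGen _ fun p q => (p = gen4 K 0 ∧ q = gen4 K 1) ∨ (p = gen4 K 2 ∧ q = gen4 K 3)

noncomputable def cong03_12 : Cong (free4 K) :=
  conGen _ fun p q => (p = gen4 K 0 ∧ q = gen4 K 3) ∨ (p = gen4 K 1 ∧ q = gen4 K 2)

noncomputable def cong12 : Cong (free4 K) :=
  conGen _ fun p q => p = gen4 K 1 ∧ q = gen4 K 2

def DayStep (w w' : (free4 K).carrier) : Prop :=
  (cong12 K).r w w' ∨ (cong01_23 K ⊓ cong03_12 K).r w w'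

theorem cong12_le_cong03_12 : cong12 K ≤ cong03_12 K :=
  conGen_le fun _ _ h => conGen_r_of _ (.inr h)

/-- Day's chain: `(gen4 0, gen4 3)` lies in `(cong12 ⊔ cong01_23) ⊓ cong03_12`, which is
`cong12 ⊔ (cong01_23 ⊓ cong03_12)` by the modular law. -/
theorem dayStep_chain [IsModularLattice (Cong (free4 K))] :
    ReflTransGen (DayStep K) (gen4 K 0) (gen4 K 3) := by
  let R := cong12 K ⊔ cong01_23 K
  have h03 : R.r (gen4 K 0) (gen4 K 3) :=
    calc R.r (gen4 K 0) (gen4 K 1) := (le_sup_right : _ ≤ R) _ _ (conGen_r_of _ (.inl ⟨rfl, rfl⟩))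
      R.r _ (gen4 K 2) := (le_sup_left : _ ≤ R) _ _ (conGen_r_of _ ⟨rfl, rfl⟩)
      R.r _ (gen4 K 3) := (le_sup_right : _ ≤ R) _ _ (conGen_r_of _ (.inr ⟨rfl, rfl⟩))
  have h : (R ⊓ cong03_12 K).r (gen4 K 0) (gen4 K 3) :=
    Cong.inf_r.mpr ⟨h03, conGen_r_of _ (.inl ⟨rfl, rfl⟩)⟩
  rw [sup_inf_assoc_of_le _ (cong12_le_cong03_12 K), Cong.sup_r] at h
  exact h

variable {K} {G : Algebra S} (hG : InHSP K G)

noncomputable def dayOp (w : (free4 K).carrier) (a : Fin 4 → G.carrier) : G.carrier :=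
  (evalFreeHom (InHSP K) _ G hG (a ∘ ULift.down)).toFun w

theorem Cong.rel_dayOp (ρ : Cong G) (w : (free4 K).carrier) {a b : Fin 4 → G.carrier}
    (h : ∀ i, ρ.r (a i) (b i)) : ρ.r (dayOp hG w a) (dayOp hG w b) := by
  rw [dayOp, dayOp, evalFreeHom_apply, evalFreeHom_apply]
  exact ρ.rel_eval (fun z : ULift (Fin 4) => h z.down) _

theorem IsMatrix.dayOp {x y : Cong G} (w : (free4 K).carrier) {p q r s : Fin 4 → G.carrier}
    (h : ∀ i, IsMatrix x y (p i) (q i) (r i) (s i)) :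
    IsMatrix x y (dayOp hG w p) (dayOp hG w q) (dayOp hG w r) (dayOp hG w s) := by
  simp only [UAlg.dayOp, evalFreeHom_apply]
  exact IsMatrix.eval _ fun z : ULift (Fin 4) => h z.down

theorem dayOp_eq_of_rel {s : (free4 K).carrier → (free4 K).carrier → Prop}
    {a : Fin 4 → G.carrier} (hs : ∀ p q, s p q → dayOp hG p a = dayOp hG q a)
    {w w' : (free4 K).carrier} (h : (conGen _ s).r w w') : dayOp hG w a = dayOp hG w' a :=
  (conGen_le (c := Hom.ker _) hs) _ _ h

theorem dayOp_cong01_23 {w w' : (free4 K).carrier} (h : (cong01_23 K).r w w')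
    (a d : G.carrier) : dayOp hG w ![a, a, d, d] = dayOp hG w' ![a, a, d, d] :=
  dayOp_eq_of_rel hG (by rintro _ _ (⟨rfl, rfl⟩ | ⟨rfl, rfl⟩) <;> rfl) h

theorem dayOp_cong03_12 {w w' : (free4 K).carrier} (h : (cong03_12 K).r w w')
    (a b : G.carrier) : dayOp hG w ![a, b, b, a] = dayOp hG w' ![a, b, b, a] :=
  dayOp_eq_of_rel hG (by rintro _ _ (⟨rfl, rfl⟩ | ⟨rfl, rfl⟩) <;> rfl) h

theorem dayOp_cong12 {w w' : (free4 K).carrier} (h : (cong12 K).r w w')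
    (a b d : G.carrier) : dayOp hG w ![a, b, b, d] = dayOp hG w' ![a, b, b, d] :=
  dayOp_eq_of_rel hG (by rintro _ _ ⟨rfl, rfl⟩; rfl) h

theorem dayOp_abba {w : (free4 K).carrier} (hw : ReflTransGen (DayStep K) (gen4 K 0) w)
    (a b : G.carrier) : dayOp hG w ![a, b, b, a] = a := by
  refine (dayOp_cong03_12 hG (Cong.rel_of_reflTransGen _ (fun _ _ h => ?_) hw) a b).symm
  exact h.elim (cong12_le_cong03_12 K _ _) fun h => (Cong.inf_r.mp h).2

end Day

section Modular

variable {K : Algebra S → Prop} {G : Algebra S} {x y y' δ δ' : Cong G}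

/-- With Day terms `m`: `q = m(q,p,r,s)` at the start of the chain and `m(q,p,r,s) = s` at
its end, and each Day step moves `m(q,p,r,s)` by `Cg(p, r)` or by `δ`. -/
theorem Centralizes.rel_sup_conGen_of_isMatrix (hG : InHSP K G)
    (hday : ReflTransGen (DayStep K) (gen4 K 0) (gen4 K 3)) (hC : Centralizes x y δ)
    {p q r s : G.carrier} (hm : IsMatrix x y p q r s) :
    (conGen G (fun u v => u = p ∧ v = r) ⊔ δ).r q s := by
  set Θ := conGen G fun u v => u = p ∧ v = r
  have hΘ : Θ ≤ Θ ⊔ δ := le_sup_left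
  have hδ : δ ≤ Θ ⊔ δ := le_sup_right
  have hΘstep : ∀ w, Θ.r (dayOp hG w ![q, p, r, s]) (dayOp hG w ![q, p, p, s]) := fun w =>
    Θ.rel_dayOp hG w fun i => by
      fin_cases i
      exacts [Θ.iseqv.refl q, Θ.iseqv.refl p, Θ.iseqv.symm (conGen_r_of _ ⟨rfl, rfl⟩),
        Θ.iseqv.refl s]
  have hδstep : ∀ {w}, ReflTransGen (DayStep K) (gen4 K 0) w →
      δ.r (dayOp hG w ![q, p, r, s]) (dayOp hG w ![q, q, s, s]) := by
    intro w hw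
    have hmw : IsMatrix x y (dayOp hG w ![q, p, p, q]) (dayOp hG w ![q, q, q, q])
        (dayOp hG w ![q, p, r, s]) (dayOp hG w ![q, q, s, s]) :=
      IsMatrix.dayOp hG w fun i => by
        fin_cases i
        exacts [.of_rel_y (y.iseqv.refl q), .of_rel_y hm.top_rel, hm, .of_rel_x hm.right_rel]
    refine hC.isMatrix hmw ?_
    rw [dayOp_abba hG hw q p, dayOp_abba hG hw q q]
    exact δ.iseqv.refl q
  suffices ∀ {w}, ReflTransGen (DayStep K) (gen4 K 0) w →
      (Θ ⊔ δ).r q (dayOp hG w ![q, p, r, s]) from this hday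
  intro w hw
  induction hw with
  | refl => exact (Θ ⊔ δ).iseqv.refl q
  | @tail w w' hw hstep ih =>
    have hw' := hw.tail hstep
    refine (Θ ⊔ δ).iseqv.trans ih ?_
    rcases hstep with h | h
    · calc (Θ ⊔ δ).r (dayOp hG w ![q, p, r, s]) (dayOp hG w ![q, p, p, s]) := hΘ _ _ (hΘstep w)
        _ = dayOp hG w' ![q, p, p, s] := dayOp_cong12 hG h q p s
        (Θ ⊔ δ).r _ (dayOp hG w' ![q, p, r, s]) := hΘ _ _ (Θ.iseqv.symm (hΘstep w'))
    · calc (Θ ⊔ δ).r (dayOp hG w ![q, p, r, s]) (dayOp hG w ![q, q, s, s]) := hδ _ _ (hδstep hw)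
        _ = dayOp hG w' ![q, q, s, s] := dayOp_cong01_23 hG (Cong.inf_r.mp h).1 q s
        (Θ ⊔ δ).r _ (dayOp hG w' ![q, p, r, s]) := hδ _ _ (δ.iseqv.symm (hδstep hw'))

theorem Centralizes.swap_of_le (hG : InHSP K G)
    (hday : ReflTransGen (DayStep K) (gen4 K 0) (gen4 K 3)) (h : Centralizes x y δ)
    (hle : δ ≤ δ') : Centralizes y x δ' := by
  intro n t a b c d hab hcd hδ
  have := h.rel_sup_conGen_of_isMatrix hG hday
    (IsMatrix.of_centralizes_instance (x := y) (y := x) t hab hcd).transpose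
  exact (sup_le (conGen_le (by rintro _ _ ⟨rfl, rfl⟩; exact hδ)) hle : _ ≤ δ') _ _ this

theorem Centralizes.symm (hG : InHSP K G)
    (hday : ReflTransGen (DayStep K) (gen4 K 0) (gen4 K 3)) (h : Centralizes x y δ) :
    Centralizes y x δ :=
  h.swap_of_le hG hday le_rfl

theorem Centralizes.mono_modulo (hG : InHSP K G)
    (hday : ReflTransGen (DayStep K) (gen4 K 0) (gen4 K 3)) (h : Centralizes x y δ)
    (hle : δ ≤ δ') : Centralizes x y δ' :=
  (h.symm hG hday).swap_of_le hG hday hle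

theorem Centralizes.sup_right (hG : InHSP K G)
    (hday : ReflTransGen (DayStep K) (gen4 K 0) (gen4 K 3)) (h : Centralizes x y δ)
    (h' : Centralizes x y' δ) : Centralizes x (y ⊔ y') δ :=
  ((h.symm hG hday).sup_left (h'.symm hG hday)).symm hG hday

theorem Centralizes.sup_sup (hG : InHSP K G)
    (hday : ReflTransGen (DayStep K) (gen4 K 0) (gen4 K 3)) (h : Centralizes x y δ)
    (θ : Cong G) : Centralizes (x ⊔ θ) (y ⊔ θ) (δ ⊔ θ) :=
  ((h.mono_modulo hG hday le_sup_left).sup_left (centralizes_of_left_le le_sup_right)).sup_right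
    hG hday (centralizes_of_right_le le_sup_right)

end Modular

section Surjective

variable {F B : Algebra S} (π : Hom F B)

theorem Centralizes.of_conComap (hπ : Surjective π.toFun) {x y z : Cong B}
    (h : Centralizes (conComap π x) (conComap π y) (conComap π z)) : Centralizes x y z := by
  intro n t a b c d hab hcd hδ
  obtain ⟨a, rfl⟩ := hπ a
  obtain ⟨b, rfl⟩ := hπ b
  obtain ⟨c, rfl⟩ := hπ.comp_left c
  obtain ⟨d, rfl⟩ := hπ.comp_left d
  have hπt : ∀ (a : F.carrier) (c : Fin n → F.carrier),
      t.eval B (Sum.elim (fun _ => π.toFun a) (π.toFun ∘ c)) =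
        π.toFun (t.eval F (Sum.elim (fun _ => a) c)) := by
    intro a c
    rw [Hom.map_eval, Sum.comp_elim]
    rfl
  rw [hπt, hπt] at hδ ⊢
  exact h n t a b c d hab hcd hδ

def pushCong (hπ : Surjective π.toFun) (x : Cong F) (hx : Hom.ker π ≤ x) : Cong B where
  r b b' := ∃ u v, π.toFun u = b ∧ π.toFun v = b' ∧ x.r u v
  iseqv := by
    refine ⟨fun b => ?_, ?_, ?_⟩
    · obtain ⟨u, rfl⟩ := hπ b
      exact ⟨u, u, rfl, rfl, x.iseqv.refl u⟩
    · rintro _ _ ⟨u, v, rfl, rfl, huv⟩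
      exact ⟨v, u, rfl, rfl, x.iseqv.symm huv⟩
    · rintro _ _ _ ⟨u, v, rfl, rfl, huv⟩ ⟨v', w, hv', rfl, hvw⟩
      exact ⟨u, w, rfl, rfl, x.iseqv.trans huv (x.iseqv.trans (hx _ _ hv'.symm) hvw)⟩
  compat o b b' h := by
    choose u v hu hv huv using h
    refine ⟨F.interp o u, F.interp o v, ?_, ?_, x.compat o _ _ huv⟩ <;>
    rw [π.map_interp] <;> congr 1 <;> funext i
    exacts [hu i, hv i]

variable {π} {hπ : Surjective π.toFun} {x : Cong F} {hx : Hom.ker π ≤ x}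

theorem conComap_pushCong : conComap π (pushCong π hπ x hx) = x :=
  le_antisymm (fun _ _ ⟨_, _, hu, hv, h⟩ => x.iseqv.trans (hx _ _ hu.symm)
    (x.iseqv.trans h (hx _ _ hv))) fun u v h => ⟨u, v, rfl, rfl, h⟩

theorem pushCong_le_iff {y : Cong B} : pushCong π hπ x hx ≤ y ↔ x ≤ conComap π y :=
  ⟨fun h u v huv => h _ _ ⟨u, v, rfl, rfl, huv⟩,
    fun h => by rintro _ _ ⟨u, v, rfl, rfl, huv⟩; exact h u v huv⟩

theorem le_pushCong {y : Cong B} (h : conComap π y ≤ x) : y ≤ pushCong π hπ x hx := by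
  intro b b' hb
  obtain ⟨u, rfl⟩ := hπ b
  obtain ⟨v, rfl⟩ := hπ b'
  exact ⟨u, v, rfl, rfl, h u v hb⟩

theorem ker_eq_conComap_bot : Hom.ker π = conComap π ⊥ :=
  Cong.ext fun _ _ => Cong.bot_r.symm

end Surjective

section Coordinates

variable {F : Algebra S} {ι : Type u} {A : ι → Algebra S} (e : Hom F (prodAlg A))

def coordCong (J : Set ι) : Cong F where
  r u v := ∀ i ∈ J, e.toFun u i = e.toFun v i
  iseqv :=
    ⟨fun _ _ _ => rfl, fun h i hi => (h i hi).symm, fun h h' i hi => (h i hi).trans (h' i hi)⟩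
  compat o a b h i hi := by
    rw [e.map_interp, e.map_interp]
    exact congrArg ((A i).interp o) (funext fun j => h j i hi)

theorem coordCong_univ (he : Injective e.toFun) : coordCong e Set.univ = ⊥ :=
  le_bot_iff.mp fun _ _ h => Cong.bot_r.mpr (he (funext fun i => h i trivial))

theorem Hom.map_eval_apply {X : Type v} (t : Tm S X) (v : X → F.carrier) (i : ι) :
    e.toFun (t.eval F v) i = t.eval (A i) (fun z => e.toFun (v z) i) := by
  rw [Hom.map_eval, Tm.eval_prodAlg]
  rfl

theorem centralizes_coordCong (J J' : Set ι) :
    Centralizes (coordCong e J) (coordCong e J') (coordCong e (J ∪ J')) := by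
  intro n t a b c d hab hcd hδ i hi
  rw [e.map_eval_apply, e.map_eval_apply]
  rcases hi with hi | hi
  · have hb : ∀ c : Fin n → F.carrier, (fun z => e.toFun (Sum.elim (fun _ : Unit => b) c z) i) =
        fun z => e.toFun (Sum.elim (fun _ : Unit => a) c z) i :=
      fun c => funext <| Sum.rec (fun _ => (hab i hi).symm) fun _ => rfl
    rw [hb, hb, ← e.map_eval_apply, ← e.map_eval_apply]
    exact hδ i (.inl hi)
  · exact congrArg (t.eval (A i)) (funext fun | .inl _ => rfl | .inr j => hcd j i hi)

end Coordinates

section Monolith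

variable {B : Algebra S} {μ α : Cong B}

theorem IsMonolith.inf_eq_bot_of_not_le (hμ : IsMonolith B μ) {z : Cong B} (hz : ¬ μ ≤ z) :
    μ ⊓ z = ⊥ :=
  by_contra fun h => hz ((hμ.2 _ h).trans inf_le_right)

theorem IsMonolith.le_of_centralizes (hμ : IsMonolith B μ)
    (hmax : ∀ α' : Cong B, commutator μ α' = ⊥ → α' ≤ α) {x y z : Cong B} (hx : μ ≤ x)
    (h : Centralizes x y z) (hy : ¬ y ≤ α) : μ ≤ z := by
  by_contra hz
  refine hy (hmax y (le_bot_iff.mp ?_))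
  rw [← hμ.inf_eq_bot_of_not_le hz]
  exact le_inf (commutator_le_left μ y) (h.mono_left hx).commutator_le

theorem IsMonolith.le_sUnion (hμ : IsMonolith B μ)
    (hmax : ∀ α' : Cong B, commutator μ α' = ⊥ → α' ≤ α) {ι : Type*} {η : Set ι → Cong B}
    (hempty : μ ≤ η ∅) (hcent : ∀ J J', Centralizes (η J) (η J') (η (J ∪ J')))
    (T : Finset (Set ι)) (hT : ∀ J ∈ T, ¬ η J ≤ α) : μ ≤ η (⋃₀ (T : Set (Set ι))) := by
  classical
  induction T using Finset.induction_on with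
  | empty => simpa using hempty
  | insert J T _ ih =>
    rw [Finset.coe_insert, Set.sUnion_insert, Set.union_comm]
    exact hμ.le_of_centralizes hmax (ih fun J' hJ' => hT J' (Finset.mem_insert_of_mem hJ'))
      (hcent _ J) (hT J (Finset.mem_insert_self J T))

theorem IsMonolith.exists_ultrafilter (hμ : IsMonolith B μ)
    (hmax : ∀ α' : Cong B, commutator μ α' = ⊥ → α' ≤ α) {ι : Type*} (η : Set ι → Cong B)
    (hempty : μ ≤ η ∅) (huniv : η Set.univ = ⊥)
    (hcent : ∀ J J', Centralizes (η J) (η J') (η (J ∪ J'))) :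
    ∃ U : Ultrafilter ι, ∀ J ∈ U, η J ≤ α :=
  Ultrafilter.exists_forall_of_sUnion_ne_univ _ fun T hT hcover => by
    have := hμ.le_sUnion hmax hempty hcent T hT
    rw [hcover, huniv] at this
    exact hμ.1 (le_bot_iff.mp this)

end Monolith

section Quotients

noncomputable def Hom.quotLift {X Y : Algebra S} (f : Hom X Y) (c : Cong X) (hc : c ≤ f.ker) :
    Hom (quotAlg X c) Y where
  toFun := Quotient.lift f.toFun hc
  map_interp o a := by
    refine (f.map_interp o _).trans (congrArg (Y.interp o) (funext fun i => ?_))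
    conv_rhs => rw [← Quotient.out_eq (a i)]
    rfl

variable {K : Algebra S → Prop} {F B : Algebra S} {ι : Type u} {A : ι → Algebra S}

/-- `F / e⁻¹(ultraCong A U)` embeds into the ultraproduct and maps onto `B / α`. -/
theorem inHSPu_quotAlg (hK : ∀ i, K (A i)) (e : Hom F (prodAlg A)) (π : Hom F B)
    (hπ : Surjective π.toFun) (U : Ultrafilter ι) {α : Cong B}
    (hU : conComap e (ultraCong A U) ≤ conComap π α) : InHSPu K (quotAlg B α) := by
  refine ⟨ι, A, U, hK, quotAlg F (conComap e (ultraCong A U)),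
    ⟨((natHom _ _).comp e).quotLift _ fun _ _ h => Quotient.sound h, ?_⟩,
    ((natHom B α).comp π).quotLift _ fun _ _ h => Quotient.sound (hU _ _ h), ?_⟩
  · rintro ⟨u⟩ ⟨v⟩ huv
    exact Quotient.sound (Quotient.exact (s := (ultraCong A U).toSetoid) huv)
  · rintro ⟨b⟩
    obtain ⟨u, rfl⟩ := hπ b
    exact ⟨Quotient.mk _ u, rfl⟩

end Quotients

theorem quot_centralizer_mem_HSPu_general (K : Algebra S → Prop)
    (hmod : ∀ A : Algebra S, InHSP K A → IsModularLattice (Cong A))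
    {B : Algebra S} (hB : InHSP K B) (μ : Cong B) (hμ : IsMonolith B μ)
    (α : Cong B)
    (hmax : ∀ α' : Cong B, commutator μ α' = ⊥ → α' ≤ α) :
    InHSPu K (quotAlg B α) := by
  obtain ⟨F, ⟨ι, A, hK, e, he⟩, π, hπ⟩ := hB
  have := hmod _ (freeAlg_mem (K := K) (ULift.{u} (Fin 4)))
  have hday := dayStep_chain K
  let η : Set ι → Cong B := fun J => pushCong π hπ (coordCong e J ⊔ Hom.ker π) le_sup_right
  obtain ⟨U, hU⟩ := hμ.exists_ultrafilter hmax η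
    (le_pushCong (le_sup_of_le_left fun _ _ _ _ hi => hi.elim))
    (le_bot_iff.mp (pushCong_le_iff.mpr (by
      rw [coordCong_univ e he, bot_sup_eq, ker_eq_conComap_bot])))
    fun J J' => .of_conComap π hπ <| by
      simp only [η, conComap_pushCong]
      exact (centralizes_coordCong e J J').sup_sup (InSP.inHSP ⟨ι, A, hK, e, he⟩) hday _
  exact inHSPu_quotAlg hK e π hπ U fun u v huv =>
    pushCong_le_iff.mp (hU _ huv) u v ((le_sup_left : coordCong e _ ≤ _) u v fun _ hi => hi)

/-- Jónsson's Theorem, as generalized by Hagemann, Hermann,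
Freese, McKenzie, and Hrushovskii: Suppose `HSP(K)` is congruence-modular,
`B ∈ HSP(K)` is subdirectly irreducible with monolith `μ`, and `α` is the
centralizer of `μ`, i.e. the largest congruence with `[μ, α] = ⊥`. Then
`B/α ∈ HSP_u(K)`. -/
theorem quot_centralizer_mem_HSPu (K : Algebra S → Prop)
    (hmod : ∀ A : Algebra S, InHSP K A → IsModularLattice (Cong A))
    {B : Algebra S} (hB : InHSP K B) (μ : Cong B) (hμ : IsMonolith B μ)
    (α : Cong B) (hα : commutator μ α = ⊥)
    (hmax : ∀ α' : Cong B, commutator μ α' = ⊥ → α' ≤ α) :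
    InHSPu K (quotAlg B α) :=
  quot_centralizer_mem_HSPu_general K hmod hB μ hμ α hmax

end UAlg
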